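/- (Total mass of E^{(k)}.) For all integers k ≥ 0, f ≥ 1 and N ≥ 0: Σ_{x=0}^{f·p^N − 1} E^{(k)}_{u:a_1,q}(x ; f·p^N) = (1−u)^{−1} · H_k^{(1)}(u,q|a_1), where H_k^{(1)}(u,q|a_1) := (1−u)(1−q)^{−k} Σ_{l=0}^k binom(k,l)(−1)^l (1−q^{l·a_1}u)^{−1}. In particular, ∫_X dE^{(k)}_{u:a_1,q} = ∫_{ℤ_p} dE^{(k)}_{u:a_1,q} = (1−u)^{−1} H_k^{(1)}(u,q|a_1). -/

import Mathlib

open Filter Finset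

/-- For `q` in a normed field and a `p`-adic integer `z`, the power `q^z`, defined as the
limit of `q^(z mod p^N)` (for convergent `q` this agrees with `exp_p (z · log_p q)`). -/
noncomputable def qpow {p : ℕ} [Fact p.Prime] {K : Type*} [NormedField K] (q : K) (z : ℤ_[p]) :
    K :=
  limUnder atTop fun N : ℕ => q ^ (z.appr N)

/-- The `q`-number `[z : q] = (1 - q^z)/(1 - q)` for a `p`-adic integer `z`. -/
noncomputable def qnum {p : ℕ} [Fact p.Prime] {K : Type*} [NormedField K] (q : K) (z : ℤ_[p]) :
    K :=
  (1 - qpow q z) / (1 - q)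

/-- The `q`-analogue of the Euler–Barnes polynomial
`H_n^{(r)}(w, u, q | a_1, …, a_r)
  = (1-u)^r (1-q)^{-n} ∑_{l=0}^n C(n,l) (-1)^l q^{lw} ∏_j (1 - q^{l a_j} u)⁻¹`. -/
noncomputable def qEulerBarnes {p : ℕ} [Fact p.Prime] {K : Type*} [NormedField K]
    (r n : ℕ) (w : ℤ_[p]) (u q : K) (a : Fin r → ℤ_[p]) : K :=
  (1 - u) ^ r * ((1 - q)⁻¹) ^ n *
    ∑ l ∈ Finset.range (n + 1),
      (n.choose l : K) * (-1) ^ l * qpow q ((l : ℤ_[p]) * w) *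
        ∏ j, (1 - qpow q ((l : ℤ_[p]) * a j) * u)⁻¹

/-- The paper's distribution `E^{(k)}_{u:a_1,q}(x + M ℤ_p)` from formula (3):
`E^{(k)}(x; M) = u^x (1-q)^{-k} ∑_{l=0}^k C(k,l)(-1)^l q^{l a_1 x} (1 - q^{l a_1 M} u^M)⁻¹`. -/
noncomputable def Emeas {p : ℕ} [Fact p.Prime] {K : Type*} [NormedField K]
    (u q : K) (a1 : ℤ_[p]) (k M x : ℕ) : K :=
  u ^ x * ((1 - q)⁻¹) ^ k *
    ∑ l ∈ Finset.range (k + 1),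
      (k.choose l : K) * (-1) ^ l * qpow q (((l * x : ℕ) : ℤ_[p]) * a1) *
        (1 - qpow q (((l * M : ℕ) : ℤ_[p]) * a1) * u ^ M)⁻¹

/-! For `‖q - 1‖ < 1` and `‖p‖ < 1` the sequence `q ^ z.appr N` is Cauchy, because
`‖q ^ p ^ n - 1‖` decays geometrically: `q ^ p - 1 = (q - 1) * ∑_{i<p} q ^ i` with
`∑_{i<p} q ^ i = p + ∑_{i<p} (q ^ i - 1)`, so `‖q ^ p - 1‖ ≤ max ‖p‖ ‖q - 1‖ * ‖q - 1‖`.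
Consequently `q ^ (n z) = (q ^ z) ^ n`, and `E^{(k)}(x; M)` is a combination of the powers
`(q ^ (l a_1) u) ^ x`; summing over `x < M` gives geometric sums that cancel the denominators
`1 - (q ^ (l a_1) u) ^ M`. These are nonzero since `‖q ^ (l a_1) - 1‖ < 1 ≤ ‖1 - u ^ M‖`. -/

open Topology

section Ultrametric

variable {K : Type*} [NormedField K] [IsUltrametricDist K]

lemma norm_le_one_of_norm_sub_one_le_one {q : K} (hq : ‖q - 1‖ ≤ 1) : ‖q‖ ≤ 1 := by
  simpa using (IsUltrametricDist.norm_add_one_le_max_norm_one (q - 1)).trans (max_le hq le_rfl)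

lemma norm_pow_sub_one_le {q : K} (hq : ‖q‖ ≤ 1) (m : ℕ) : ‖q ^ m - 1‖ ≤ ‖q - 1‖ := by
  have hsum : ‖∑ i ∈ range m, q ^ i‖ ≤ 1 :=
    IsUltrametricDist.norm_sum_le_of_forall_le_of_nonneg zero_le_one fun i _ =>
      (norm_pow q i).trans_le (pow_le_one₀ (norm_nonneg q) hq)
  rw [← geom_sum_mul, norm_mul]
  exact mul_le_of_le_one_left (norm_nonneg _) hsum

lemma norm_pow_sub_one_le_max_natCast {q : K} (hq : ‖q‖ ≤ 1) (n : ℕ) :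
    ‖q ^ n - 1‖ ≤ max ‖(n : K)‖ ‖q - 1‖ * ‖q - 1‖ := by
  have hsum : ∑ i ∈ range n, q ^ i = n + ∑ i ∈ range n, (q ^ i - 1) := by
    simp [sum_sub_distrib]
  have hrest : ‖∑ i ∈ range n, (q ^ i - 1)‖ ≤ ‖q - 1‖ :=
    IsUltrametricDist.norm_sum_le_of_forall_le_of_nonneg (norm_nonneg _)
      fun i _ => norm_pow_sub_one_le hq i
  rw [← geom_sum_mul, norm_mul, hsum]
  exact mul_le_mul_of_nonneg_right
    ((IsUltrametricDist.norm_add_le_max _ _).trans (max_le_max le_rfl hrest)) (norm_nonneg _)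

lemma norm_pow_pow_sub_one_le {q : K} (hq : ‖q‖ ≤ 1) (p n : ℕ) :
    ‖q ^ p ^ n - 1‖ ≤ max ‖(p : K)‖ ‖q - 1‖ ^ n * ‖q - 1‖ := by
  set c := max ‖(p : K)‖ ‖q - 1‖
  induction n with
  | zero => simp
  | succ n ih =>
    have hQ : ‖q ^ p ^ n‖ ≤ 1 := (norm_pow q _).trans_le (pow_le_one₀ (norm_nonneg q) hq)
    have hQc : max ‖(p : K)‖ ‖q ^ p ^ n - 1‖ ≤ c :=
      max_le_max le_rfl (norm_pow_sub_one_le hq _)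
    calc ‖q ^ p ^ (n + 1) - 1‖ = ‖(q ^ p ^ n) ^ p - 1‖ := by rw [← pow_mul, pow_succ]
      _ ≤ max ‖(p : K)‖ ‖q ^ p ^ n - 1‖ * ‖q ^ p ^ n - 1‖ :=
          norm_pow_sub_one_le_max_natCast hQ p
      _ ≤ c * (c ^ n * ‖q - 1‖) :=
          mul_le_mul hQc ih (norm_nonneg _) (le_max_of_le_right (norm_nonneg _))
      _ = c ^ (n + 1) * ‖q - 1‖ := by ring

lemma norm_pow_sub_pow_le_of_modEq {q : K} (hq : ‖q‖ ≤ 1) {p n a b : ℕ}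
    (h : a ≡ b [MOD p ^ n]) : ‖q ^ a - q ^ b‖ ≤ max ‖(p : K)‖ ‖q - 1‖ ^ n * ‖q - 1‖ := by
  wlog hba : b ≤ a generalizing a b
  · rw [norm_sub_rev]; exact this h.symm (by omega)
  obtain ⟨j, hj⟩ := (Nat.modEq_iff_dvd' hba).mp h.symm
  have hpow : ∀ m, ‖q ^ m‖ ≤ 1 := fun m => (norm_pow q m).trans_le (pow_le_one₀ (norm_nonneg q) hq)
  calc ‖q ^ a - q ^ b‖ = ‖q ^ b‖ * ‖(q ^ p ^ n) ^ j - 1‖ := by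
        rw [← pow_mul, ← hj, ← norm_mul, mul_sub, mul_one, ← pow_add, Nat.add_sub_cancel' hba]
    _ ≤ 1 * ‖q ^ p ^ n - 1‖ :=
        mul_le_mul (hpow b) (norm_pow_sub_one_le (hpow _) j) (norm_nonneg _) zero_le_one
    _ ≤ _ := by rw [one_mul]; exact norm_pow_pow_sub_one_le hq p n

lemma one_sub_mul_ne_zero_of_norm_sub_one_lt_one {w v : K} (hw : ‖w - 1‖ < 1)
    (hv : 1 ≤ ‖1 - v‖) : 1 - w * v ≠ 0 := by
  have hv' : ‖v‖ ≤ ‖1 - v‖ := by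
    simpa using (IsUltrametricDist.norm_add_le_max (v - 1) 1).trans
      (max_le (by rw [norm_sub_rev]) (by simpa using hv))
  have hlt : ‖v * (w - 1)‖ < ‖1 - v‖ := by
    rw [norm_mul]
    exact (mul_le_mul_of_nonneg_right hv' (norm_nonneg _)).trans_lt
      (mul_lt_of_lt_one_right (one_pos.trans_le hv) hw)
  intro h
  have : 1 - v = v * (w - 1) := by linear_combination h
  exact hlt.ne (by rw [this])

end Ultrametric

lemma geom_sum_mul_inv_one_sub_pow {K : Type*} [Field K] {x : K} {M : ℕ} (h : 1 - x ^ M ≠ 0) :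
    (∑ i ∈ range M, x ^ i) * (1 - x ^ M)⁻¹ = (1 - x)⁻¹ := by
  have hx : 1 - x ≠ 0 := fun hx => h (by rw [← sub_eq_zero.mp hx, one_pow, sub_self])
  rw [mul_inv_eq_iff_eq_mul₀ h, ← mul_neg_geom_sum, inv_mul_cancel_left₀ hx]

lemma PadicInt.appr_natCast_mul_modEq {p : ℕ} [Fact p.Prime] (z : ℤ_[p]) (n N : ℕ) :
    ((n : ℤ_[p]) * z).appr N ≡ z.appr N * n [MOD p ^ N] := by
  refine (ZMod.natCast_eq_natCast_iff _ _ _).mp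
    (zmod_congr_of_sub_mem_span N _ _ _ (appr_spec N _) ?_)
  have h : (n : ℤ_[p]) * z - ((z.appr N * n : ℕ) : ℤ_[p]) = n * (z - z.appr N) := by
    push_cast; ring
  rw [h]
  exact Ideal.mul_mem_left _ _ (appr_spec N z)

section Qpow

variable {p : ℕ} [Fact p.Prime] {K : Type*} [NormedField K] [IsUltrametricDist K]
  [CompleteSpace K] {q : K}

lemma tendsto_pow_appr_qpow (hq : ‖q - 1‖ < 1) (hp : ‖(p : K)‖ < 1) (z : ℤ_[p]) :
    Tendsto (fun N => q ^ z.appr N) atTop (𝓝 (qpow q z)) := by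
  have hq1 := norm_le_one_of_norm_sub_one_le_one hq.le
  refine CauchySeq.tendsto_limUnder
    (cauchySeq_of_le_geometric _ ‖q - 1‖ (max_lt hp hq) fun n => ?_)
  rw [dist_eq_norm, mul_comm]
  refine norm_pow_sub_pow_le_of_modEq hq1 ?_
  exact (Nat.modEq_iff_dvd' (z.appr_mono n.le_succ)).mpr (z.dvd_appr_sub_appr n _ n.le_succ)

lemma qpow_natCast_mul (hq : ‖q - 1‖ < 1) (hp : ‖(p : K)‖ < 1) (n : ℕ) (z : ℤ_[p]) :
    qpow q ((n : ℤ_[p]) * z) = qpow q z ^ n := by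
  have hq1 := norm_le_one_of_norm_sub_one_le_one hq.le
  have hbound : Tendsto (fun N => max ‖(p : K)‖ ‖q - 1‖ ^ N * ‖q - 1‖) atTop (𝓝 0) := by
    simpa using (tendsto_pow_atTop_nhds_zero_of_lt_one (le_max_of_le_right (norm_nonneg _))
      (max_lt hp hq)).mul_const ‖q - 1‖
  have hdiff :
      Tendsto (fun N => q ^ ((n : ℤ_[p]) * z).appr N - (q ^ z.appr N) ^ n) atTop (𝓝 0) := by
    refine squeeze_zero_norm (fun N => ?_) hbound
    rw [← pow_mul]
    exact norm_pow_sub_pow_le_of_modEq hq1 (z.appr_natCast_mul_modEq n N)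
  refine tendsto_nhds_unique (tendsto_pow_appr_qpow hq hp _) ?_
  simpa using hdiff.add ((tendsto_pow_appr_qpow hq hp z).pow n)

lemma norm_qpow_sub_one_le (hq : ‖q - 1‖ < 1) (hp : ‖(p : K)‖ < 1) (z : ℤ_[p]) :
    ‖qpow q z - 1‖ ≤ ‖q - 1‖ :=
  le_of_tendsto ((tendsto_pow_appr_qpow hq hp z).sub_const 1).norm
    (Eventually.of_forall fun _ => norm_pow_sub_one_le (norm_le_one_of_norm_sub_one_le_one hq.le) _)

lemma Emeas_eq_sum_pow (hq : ‖q - 1‖ < 1) (hp : ‖(p : K)‖ < 1) (u : K) (a1 : ℤ_[p])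
    (k M x : ℕ) :
    Emeas u q a1 k M x = ((1 - q)⁻¹) ^ k * ∑ l ∈ range (k + 1), (k.choose l : K) * (-1) ^ l *
      ((qpow q ((l : ℤ_[p]) * a1) * u) ^ x * (1 - (qpow q ((l : ℤ_[p]) * a1) * u) ^ M)⁻¹) := by
  have hpow : ∀ l m : ℕ, qpow q (((l * m : ℕ) : ℤ_[p]) * a1) = qpow q ((l : ℤ_[p]) * a1) ^ m := by
    intro l m
    rw [← qpow_natCast_mul hq hp]
    congr 1
    push_cast; ring
  simp only [Emeas, hpow, mul_pow, mul_sum]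
  refine sum_congr rfl fun l _ => ?_
  ring

end Qpow

theorem sum_Emeas_eq_general
    {p : ℕ} [Fact p.Prime] {K : Type*} [NormedField K] [CompleteSpace K]
    [IsUltrametricDist K] (hpK : ‖(p : K)‖ = (p : ℝ)⁻¹)
    (a1 : ℤ_[p])
    (u q : K) (hu : ∀ f : ℕ, 1 ≤ f → 1 ≤ ‖1 - u ^ f‖)
    (hq1 : ‖1 - q‖ < (p : ℝ) ^ (-(1 : ℝ) / ((p : ℝ) - 1)))
    (k f N : ℕ) (hf : 1 ≤ f) :
    ∑ x ∈ Finset.range (f * p ^ N), Emeas u q a1 k (f * p ^ N) x =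
      (1 - u)⁻¹ *
        ((1 - u) * ((1 - q)⁻¹) ^ k *
          ∑ l ∈ Finset.range (k + 1),
            (k.choose l : K) * (-1) ^ l * (1 - qpow q ((l : ℤ_[p]) * a1) * u)⁻¹) := by
  have hp1 : (1 : ℝ) < p := by exact_mod_cast (Fact.out : p.Prime).one_lt
  have hp : ‖(p : K)‖ < 1 := by
    rw [hpK]; exact inv_lt_one_of_one_lt₀ hp1
  have hq : ‖q - 1‖ < 1 := by
    rw [norm_sub_rev]
    exact hq1.trans (Real.rpow_lt_one_of_one_lt_of_neg hp1
      (div_neg_of_neg_of_pos (by norm_num) (by linarith)))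
  have hM : 1 ≤ f * p ^ N := Nat.mul_pos hf (pow_pos (Fact.out : p.Prime).pos N)
  have hden : ∀ l : ℕ, 1 - (qpow q ((l : ℤ_[p]) * a1) * u) ^ (f * p ^ N) ≠ 0 := fun l => by
    have hQ := (norm_qpow_sub_one_le hq hp ((l : ℤ_[p]) * a1)).trans_lt hq
    rw [mul_pow]
    exact one_sub_mul_ne_zero_of_norm_sub_one_lt_one ((norm_pow_sub_one_le
      (norm_le_one_of_norm_sub_one_le_one hQ.le) _).trans_lt hQ) (hu _ hM)
  have hu1 : 1 - u ≠ 0 := fun h => by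
    have := hu 1 le_rfl
    rw [pow_one, h, norm_zero] at this
    linarith
  simp only [Emeas_eq_sum_pow hq hp, ← mul_sum]
  rw [sum_comm, mul_assoc (1 - u), inv_mul_cancel_left₀ hu1]
  congr 1
  refine sum_congr rfl fun l _ => ?_
  rw [← mul_sum, ← sum_mul, geom_sum_mul_inv_one_sub_pow (hden l)]

/-- **total mass of `E^{(k)}`, Proposition 5.** For all `k ≥ 0`, `f ≥ 1`,
`N ≥ 0`: `∑_{x=0}^{f p^N - 1} E^{(k)}_{u:a_1,q}(x ; f p^N) = (1-u)⁻¹ H_k^{(1)}(u,q|a_1)`,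
where `H_k^{(1)}(u,q|a_1) = (1-u)(1-q)^{-k} ∑_{l=0}^k C(k,l)(-1)^l (1-q^{l a_1}u)⁻¹`. -/
theorem sum_Emeas_eq
    {p : ℕ} [Fact p.Prime] {K : Type*} [NormedField K] [CompleteSpace K]
    [IsUltrametricDist K] (hpK : ‖(p : K)‖ = (p : ℝ)⁻¹)
    (a1 : ℤ_[p]) (ha1 : a1 ≠ 0)
    (u q : K) (hu : ∀ f : ℕ, 1 ≤ f → 1 ≤ ‖1 - u ^ f‖)
    (hq0 : 0 < ‖1 - q‖) (hq1 : ‖1 - q‖ < (p : ℝ) ^ (-(1 : ℝ) / ((p : ℝ) - 1)))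
    (k f N : ℕ) (hf : 1 ≤ f) :
    ∑ x ∈ Finset.range (f * p ^ N), Emeas u q a1 k (f * p ^ N) x =
      (1 - u)⁻¹ *
        ((1 - u) * ((1 - q)⁻¹) ^ k *
          ∑ l ∈ Finset.range (k + 1),
            (k.choose l : K) * (-1) ^ l * (1 - qpow q ((l : ℤ_[p]) * a1) * u)⁻¹) :=
  sum_Emeas_eq_general hpK a1 u q hu hq1 k f N hf
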